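/- Let j_δ be a standard even mollifier and H a Hilbert space. Let u, v ∈ L^∞(0,T;H) be weakly continuous in time with weak limits u(0), u(T), v(0), v(T). With the constant extensions outside [0,T] and mollifications u_δ, v_δ, one has lim_{δ→0} ∫₀ᵀ (u, d/dt v_δ) + (d/dt u_δ, v) dτ = (u(T), v(T)) − (u(0), v(0)). -/

import Mathlib

open MeasureTheory Filter intervalIntegral RealInnerProductSpace

/-- The constant-in-time extension of `u : ℝ → H` outside `[0,T]`. -/
noncomputable def extendT {H : Type*} (T : ℝ) (u : ℝ → H) : ℝ → H :=
  fun t => u (max 0 (min t T))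

/-- The rescaled mollifier `j_δ(t) = δ⁻¹ j(t/δ)`. -/
noncomputable def mollK (j : ℝ → ℝ) (δ t : ℝ) : ℝ := δ⁻¹ * j (t / δ)

/-- Mollification in time of the constant extension of `u`. -/
noncomputable def mollT {H : Type*} [NormedAddCommGroup H] [NormedSpace ℝ H]
    (T : ℝ) (j : ℝ → ℝ) (u : ℝ → H) (δ t : ℝ) : H :=
  ∫ s : ℝ, mollK j δ (t - s) • extendT T u s

/-!
Write `ū`, `v̄` for the constant extensions and `K = j_δ`. Differentiating under the convolution,
the integrand at `τ ∈ (0, T]` is `∫ K'(τ - s) c(s, τ) ds`, where the kernel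
`c(s, τ) = crossInner v̄ ū s τ = ⟪v̄ s, ū τ⟫ + ⟪ū s, v̄ τ⟫` is symmetric. Split the `s`-integral
at `0` and `T`. Over `(0, T]²` the double integral vanishes, because `K'` is odd and `c` is
symmetric. Where `ū`, `v̄` are constant, `K'` integrates explicitly, leaving
`∫₀ᵀ K(τ - T) c(T, τ) dτ - ∫₀ᵀ K(τ) c(0, τ) dτ`. As `δ → 0`, each of these picks up half the
unit mass of `j_δ` at its endpoint, so the limit is
`c(T, T)/2 - c(0, 0)/2 = ⟪u T, v T⟫ - ⟪u 0, v 0⟫`.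

Weak continuity makes `ū`, `v̄` strongly measurable, since their values lie in the closed span of
their values at a countable dense set; so all the Bochner integrals are meaningful.
-/
open Set Topology
open scoped Convolution

theorem stronglyMeasurable_of_continuous_inner {α H : Type*} [TopologicalSpace α]
    [SecondCountableTopology α] [MeasurableSpace α] [OpensMeasurableSpace α]
    [NormedAddCommGroup H] [InnerProductSpace ℝ H] [CompleteSpace H]
    {f : α → H} (hf : ∀ φ : H, Continuous fun t => ⟪f t, φ⟫) :
    StronglyMeasurable f := by
  rcases isEmpty_or_nonempty α with _ | _
  · exact .of_subsingleton_dom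
  obtain ⟨d, hd⟩ := TopologicalSpace.exists_dense_seq α
  let U : ℕ → Submodule ℝ H := fun n => Submodule.span ℝ (f ∘ d '' Iic n)
  have hU : Monotone U := fun m n hmn =>
    Submodule.span_mono (image_mono (Iic_subset_Iic.2 hmn))
  have hf_mem : ∀ t, f t ∈ (⨆ n, U n).topologicalClosure := by
    intro t
    rw [← Submodule.orthogonal_orthogonal_eq_closure]
    intro w hw
    have hd_mem : ∀ n, f (d n) ∈ ⨆ n, U n := fun n =>
      Submodule.mem_iSup_of_mem n (Submodule.subset_span ⟨n, mem_Iic.2 le_rfl, rfl⟩)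
    have : (fun s => ⟪f s, w⟫) = fun _ => 0 :=
      Continuous.ext_on hd (hf w) continuous_const
        (forall_mem_range.2 fun n => Submodule.inner_right_of_mem_orthogonal (hd_mem n) hw)
    rw [real_inner_comm]
    exact congrFun this t
  have (n : ℕ) : FiniteDimensional ℝ (U n) :=
    FiniteDimensional.span_of_finite ℝ ((finite_Iic n).image _)
  have hproj_cont : ∀ n, Continuous fun t => (U n).starProjection (f t) := by
    intro n
    simp only [(stdOrthonormalBasis ℝ (U n)).starProjection_eq_sum_rankOne,
      FunLike.coe_sum, Finset.sum_apply, InnerProductSpace.rankOne_apply]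
    exact continuous_finsetSum _ fun i _ =>
      ((hf _).congr fun t => real_inner_comm _ _).smul continuous_const
  refine stronglyMeasurable_of_tendsto atTop (fun n => (hproj_cont n).stronglyMeasurable)
    (tendsto_pi_nhds.2 fun t => ?_)
  convert Submodule.starProjection_tendsto_closure_iSup U hU (f t)
  exact (Submodule.starProjection_eq_self_iff.2 (hf_mem t)).symm

theorem integral_integral_eq_zero_of_antisymm {α E : Type*} [MeasurableSpace α]
    [NormedAddCommGroup E] [NormedSpace ℝ E] {μ : Measure α} [SFinite μ] {F : α → α → E}
    (hF : Integrable (Function.uncurry F) (μ.prod μ)) (hanti : ∀ x y, F y x = -F x y) :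
    ∫ x, ∫ y, F x y ∂μ ∂μ = 0 := by
  have h : ∫ x, ∫ y, F x y ∂μ ∂μ = -∫ x, ∫ y, F x y ∂μ ∂μ := calc
    ∫ x, ∫ y, F x y ∂μ ∂μ = ∫ y, ∫ x, F x y ∂μ ∂μ := integral_integral_swap hF
    _ = ∫ y, -∫ x, F y x ∂μ ∂μ := by
      congr 1; ext y; rw [← MeasureTheory.integral_neg]; congr 1; ext x; exact hanti y x
    _ = -∫ x, ∫ y, F x y ∂μ ∂μ := MeasureTheory.integral_neg _
  rwa [eq_neg_iff_add_eq_zero, ← two_smul ℝ, smul_eq_zero, or_iff_right two_ne_zero] at h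

section Kernel

variable {K : ℝ → ℝ}

theorem deriv_neg_of_even (hK : ∀ t, K (-t) = K t) (t : ℝ) : deriv K (-t) = -deriv K t := by
  have h := deriv_comp_neg K t
  rw [show (fun x => K (-x)) = K from funext hK] at h
  rw [h, neg_neg]

theorem HasCompactSupport.integrable_deriv_comp_sub (hK : ContDiff ℝ 1 K)
    (hKc : HasCompactSupport K) (τ : ℝ) : Integrable fun s => deriv K (τ - s) :=
  ((hK.continuous_deriv le_rfl).comp (continuous_sub_left τ)).integrable_of_hasCompactSupport
    (hKc.deriv.comp_homeomorph (Homeomorph.subLeft τ))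

theorem hasDerivAt_neg_comp_sub (hK : ContDiff ℝ 1 K) (τ s : ℝ) :
    HasDerivAt (fun s => -K (τ - s)) (deriv K (τ - s)) s := by
  have h := ((hK.differentiable one_ne_zero (τ - s)).hasDerivAt.comp_const_sub τ s).neg
  rwa [neg_neg] at h

theorem integral_Iic_deriv_comp_sub (hK : ContDiff ℝ 1 K) (hKc : HasCompactSupport K)
    (τ c : ℝ) : ∫ s in Iic c, deriv K (τ - s) = -K (τ - c) := by
  have hF : Tendsto (fun s => -K (τ - s)) atBot (𝓝 0) := by
    simpa using ((hKc.comp_homeomorph (Homeomorph.subLeft τ)).is_zero_at_infty.mono_left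
      atBot_le_cocompact).neg
  rw [integral_Iic_of_hasDerivAt_of_tendsto' (fun s _ => ?_)
    (hKc.integrable_deriv_comp_sub hK τ).integrableOn hF, sub_zero]
  exact hasDerivAt_neg_comp_sub hK τ s

theorem integral_Ioi_deriv_comp_sub (hK : ContDiff ℝ 1 K) (hKc : HasCompactSupport K)
    (τ c : ℝ) : ∫ s in Ioi c, deriv K (τ - s) = K (τ - c) := by
  have hF : Tendsto (fun s => -K (τ - s)) atTop (𝓝 0) := by
    simpa using ((hKc.comp_homeomorph (Homeomorph.subLeft τ)).is_zero_at_infty.mono_left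
      atTop_le_cocompact).neg
  rw [integral_Ioi_of_hasDerivAt_of_tendsto' (fun s _ => ?_)
    (hKc.integrable_deriv_comp_sub hK τ).integrableOn hF, zero_sub, neg_neg]
  exact hasDerivAt_neg_comp_sub hK τ s

theorem integral_deriv_comp_sub_mul_eq_of_const_outside {T : ℝ} (hT : 0 ≤ T)
    (hK : ContDiff ℝ 1 K) (hKc : HasCompactSupport K) {b : ℝ → ℝ} (hb : Continuous b)
    (hb0 : ∀ s ≤ 0, b s = b 0) (hbT : ∀ s, T ≤ s → b s = b T) (τ : ℝ) :
    ∫ s, deriv K (τ - s) * b s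
      = -K τ * b 0 + K (τ - T) * b T + ∫ s in Ioc 0 T, deriv K (τ - s) * b s := by
  have hint : Integrable fun s => deriv K (τ - s) * b s :=
    (((hK.continuous_deriv le_rfl).comp (continuous_sub_left τ)).mul hb
      ).integrable_of_hasCompactSupport (hKc.deriv.comp_homeomorph (Homeomorph.subLeft τ)).mul_right
  have hIic : ∫ s in Iic 0, deriv K (τ - s) * b s = -K τ * b 0 := by
    rw [setIntegral_congr_fun measurableSet_Iic fun s hs => by rw [hb0 s hs],
      MeasureTheory.integral_mul_const, integral_Iic_deriv_comp_sub hK hKc, sub_zero]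
  have hIoi : ∫ s in Ioi T, deriv K (τ - s) * b s = K (τ - T) * b T := by
    rw [setIntegral_congr_fun measurableSet_Ioi fun s hs => by rw [hbT s (le_of_lt hs)],
      MeasureTheory.integral_mul_const, integral_Ioi_deriv_comp_sub hK hKc]
  rw [← integral_add_compl measurableSet_Iic hint, compl_Iic, ← Ioc_union_Ioi_eq_Ioi hT,
    setIntegral_union (Ioc_disjoint_Ioi le_rfl) measurableSet_Ioi hint.integrableOn
      hint.integrableOn, hIic, hIoi]
  ring

theorem setIntegral_Ioc_integral_deriv_comp_sub_mul {T : ℝ} (hT : 0 ≤ T)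
    (hK : ContDiff ℝ 1 K) (hKc : HasCompactSupport K) (hK_even : ∀ t, K (-t) = K t)
    {c : ℝ → ℝ → ℝ} (hc_meas : StronglyMeasurable (Function.uncurry c)) {C : ℝ}
    (hc_bdd : ∀ s t, |c s t| ≤ C) (hc_cont : ∀ t, Continuous fun s => c s t)
    (hc_symm : ∀ s t, c s t = c t s) (hc_left : ∀ s ≤ 0, ∀ t, c s t = c 0 t)
    (hc_right : ∀ s, T ≤ s → ∀ t, c s t = c T t) :
    ∫ τ in Ioc 0 T, ∫ s, deriv K (τ - s) * c s τ
      = (∫ τ in Ioc 0 T, K (τ - T) * c T τ) - ∫ τ in Ioc 0 T, K τ * c 0 τ := by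
  let μ := volume.restrict (Ioc (0 : ℝ) T)
  let F : ℝ → ℝ → ℝ := fun τ s => deriv K (τ - s) * c s τ
  have hK' : Continuous (deriv K) := hK.continuous_deriv le_rfl
  obtain ⟨CK, hCK⟩ := hK'.bounded_above_of_compact_support hKc.deriv
  have hF_int : Integrable (Function.uncurry F) (μ.prod μ) := by
    refine Integrable.mono' (integrable_const (CK * C)) ?_ (ae_of_all _ fun p => ?_)
    · exact (hK'.comp (continuous_fst.sub continuous_snd)).aestronglyMeasurable.mul
        (hc_meas.comp_measurable measurable_swap).aestronglyMeasurable
    · simp only [Function.uncurry, F, norm_mul, Real.norm_eq_abs (c _ _)]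
      exact mul_le_mul (hCK _) (hc_bdd _ _) (abs_nonneg _) ((norm_nonneg _).trans (hCK 0))
  have hF_anti : ∀ τ s, F s τ = -F τ s := fun τ s => by
    simp only [F, ← neg_sub τ s, deriv_neg_of_even hK_even, hc_symm s τ, neg_mul]
  have hcont (t : ℝ) : Continuous (c t) := (hc_cont t).congr fun s => hc_symm s t
  have hsplit (τ : ℝ) := integral_deriv_comp_sub_mul_eq_of_const_outside hT hK hKc
    (hc_cont τ) (fun s hs => hc_left s hs τ) (fun s hs => hc_right s hs τ) τ
  have hD_int : Integrable (fun τ => ∫ s in Ioc 0 T, deriv K (τ - s) * c s τ) μ :=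
    hF_int.integral_prod_left
  have hD : ∫ τ in Ioc 0 T, ∫ s in Ioc 0 T, deriv K (τ - s) * c s τ = 0 :=
    integral_integral_eq_zero_of_antisymm hF_int hF_anti
  have hB0 : IntegrableOn (fun τ => K τ * c 0 τ) (Ioc 0 T) :=
    (hK.continuous.mul (hcont 0)).integrableOn_Ioc
  have hBT : IntegrableOn (fun τ => K (τ - T) * c T τ) (Ioc 0 T) :=
    ((hK.continuous.comp (continuous_sub_right T)).mul (hcont T)).integrableOn_Ioc
  have hB : IntegrableOn (fun τ => K (τ - T) * c T τ - K τ * c 0 τ) (Ioc 0 T) := hBT.sub hB0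
  simp only [hsplit, neg_mul, neg_add_eq_sub]
  rw [integral_add hB hD_int, hD, add_zero, integral_sub hBT hB0]

theorem hasDerivAt_integral_comp_sub_smul {E : Type*} [NormedAddCommGroup E] [NormedSpace ℝ E]
    [CompleteSpace E] (hK : ContDiff ℝ 1 K) (hKc : HasCompactSupport K) {f : ℝ → E}
    (hf : LocallyIntegrable f) (t : ℝ) :
    HasDerivAt (fun t => ∫ s, K (t - s) • f s) (∫ s, deriv K (t - s) • f s) t := by
  convert hKc.hasDerivAt_convolution_left (ContinuousLinearMap.lsmul ℝ ℝ) hK hf t using 1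
  · ext t
    rw [convolution_eq_swap]
    rfl
  · rw [convolution_eq_swap]
    rfl

end Kernel

section Mollifier

variable {j : ℝ → ℝ} {δ : ℝ}

theorem contDiff_mollK {n : WithTop ℕ∞} (hj : ContDiff ℝ n j) : ContDiff ℝ n (mollK j δ) :=
  contDiff_const.mul (hj.comp (contDiff_id.div_const δ))

theorem mollK_eq_mul_comp_mul (j : ℝ → ℝ) (δ : ℝ) :
    mollK j δ = fun t => δ⁻¹ * j (δ⁻¹ * t) :=
  funext fun t => by rw [mollK, div_eq_inv_mul]

theorem hasCompactSupport_mollK (hj : HasCompactSupport j) (hδ : δ ≠ 0) :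
    HasCompactSupport (mollK j δ) := by
  rw [mollK_eq_mul_comp_mul]
  exact (hj.comp_smul (inv_ne_zero hδ)).mul_left

theorem integrable_mollK (hj : Integrable j) (hδ : δ ≠ 0) : Integrable (mollK j δ) := by
  rw [mollK_eq_mul_comp_mul]
  exact (hj.comp_mul_left' (inv_ne_zero hδ)).const_mul δ⁻¹

theorem mollK_neg (hj_even : ∀ t, j (-t) = j t) (t : ℝ) : mollK j δ (-t) = mollK j δ t := by
  rw [mollK, mollK, neg_div, hj_even]

theorem mollK_nonneg (hj_nonneg : ∀ t, 0 ≤ j t) (hδ : 0 ≤ δ) (t : ℝ) : 0 ≤ mollK j δ t :=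
  mul_nonneg (inv_nonneg.2 hδ) (hj_nonneg _)

theorem mollK_eq_zero_of_le (hj_supp : Function.support j ⊆ Ioo (-1) 1) (hδ : 0 < δ) {t : ℝ}
    (ht : δ ≤ t) : mollK j δ t = 0 := by
  have : j (t / δ) = 0 :=
    Function.notMem_support.1 fun h => (hj_supp h).2.not_ge ((one_le_div hδ).2 ht)
  rw [mollK, this, mul_zero]

theorem integral_mollK (hδ : 0 < δ) : ∫ t, mollK j δ t = ∫ t, j t := by
  simp only [mollK]
  rw [MeasureTheory.integral_const_mul, Measure.integral_comp_div, abs_of_pos hδ,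
    smul_eq_mul, inv_mul_cancel_left₀ hδ.ne']

theorem setIntegral_Ioi_mollK (hj : Integrable j) (hj_even : ∀ t, j (-t) = j t) (hδ : 0 < δ) :
    ∫ t in Ioi 0, mollK j δ t = (∫ t, j t) / 2 := by
  have hsymm : ∫ t in Iic 0, mollK j δ t = ∫ t in Ioi 0, mollK j δ t := by
    rw [← neg_zero, ← integral_comp_neg_Ioi, neg_zero]
    exact setIntegral_congr_fun measurableSet_Ioi fun t _ => mollK_neg hj_even t
  have h := integral_add_compl (measurableSet_Ioi (a := 0)) (integrable_mollK hj hδ.ne')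
  rw [compl_Ioi, hsymm, integral_mollK hδ] at h
  linarith

theorem setIntegral_Ioc_mollK (hj : Integrable j) (hj_even : ∀ t, j (-t) = j t)
    (hj_supp : Function.support j ⊆ Ioo (-1) 1) (hδ : 0 < δ) {T : ℝ} (hδT : δ ≤ T) :
    ∫ t in Ioc 0 T, mollK j δ t = (∫ t, j t) / 2 := by
  have hK := integrable_mollK hj hδ.ne'
  have hvanish : ∫ t in Ioi T, mollK j δ t = 0 :=
    setIntegral_eq_zero_of_forall_eq_zero fun t ht =>
      mollK_eq_zero_of_le hj_supp hδ (hδT.trans (le_of_lt ht))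
  rw [← setIntegral_Ioi_mollK hj hj_even hδ, ← Ioc_union_Ioi_eq_Ioi (hδ.le.trans hδT),
    setIntegral_union (Ioc_disjoint_Ioi le_rfl) measurableSet_Ioi hK.integrableOn hK.integrableOn,
    hvanish, add_zero]

theorem tendsto_setIntegral_Ioc_mollK_mul {T : ℝ} (hT : 0 < T) (hj : Continuous j)
    (hj_even : ∀ t, j (-t) = j t) (hj_nonneg : ∀ t, 0 ≤ j t)
    (hj_supp : Function.support j ⊆ Ioo (-1) 1) (hj_int : ∫ t, j t = 1)
    {g : ℝ → ℝ} (hg : Continuous g) :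
    Tendsto (fun δ => ∫ τ in Ioc 0 T, mollK j δ τ * g τ) (𝓝[>] 0) (𝓝 (g 0 / 2)) := by
  have hj_integrable : Integrable j := hj.integrable_of_hasCompactSupport
    (.of_support_subset_isCompact isCompact_Icc (hj_supp.trans Ioo_subset_Icc_self))
  rw [Metric.tendsto_nhds]
  intro ε hε
  obtain ⟨r, hr, hgr⟩ := Metric.continuousAt_iff.1 (hg.continuousAt (x := 0)) (ε / 2) (half_pos hε)
  filter_upwards [Ioo_mem_nhdsGT (lt_min hr hT)] with δ ⟨hδ, hδrT⟩
  have hK : Continuous (mollK j δ) := continuous_const.mul (hj.comp (continuous_id.div_const δ))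
  have hmass := setIntegral_Ioc_mollK hj_integrable hj_even hj_supp hδ
    (hδrT.le.trans (min_le_right _ _))
  rw [hj_int] at hmass
  have hdiff : (∫ τ in Ioc 0 T, mollK j δ τ * g τ) - g 0 / 2
      = ∫ τ in Ioc 0 T, mollK j δ τ * (g τ - g 0) := by
    have h1 : IntegrableOn (fun τ => mollK j δ τ * g τ) (Ioc 0 T) := (hK.mul hg).integrableOn_Ioc
    have h2 : IntegrableOn (fun τ => mollK j δ τ * g 0) (Ioc 0 T) :=
      (hK.mul continuous_const).integrableOn_Ioc
    simp only [mul_sub]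
    rw [integral_sub h1 h2, MeasureTheory.integral_mul_const, hmass]
    ring
  have hbound : ∀ τ ∈ Ioc 0 T, ‖mollK j δ τ * (g τ - g 0)‖ ≤ mollK j δ τ * (ε / 2) := by
    intro τ hτ
    rw [norm_mul, Real.norm_of_nonneg (mollK_nonneg hj_nonneg hδ.le τ)]
    rcases lt_or_ge τ δ with hτδ | hδτ
    · refine mul_le_mul_of_nonneg_left (le_of_lt (hgr ?_)) (mollK_nonneg hj_nonneg hδ.le τ)
      rw [Real.dist_0_eq_abs, abs_of_pos hτ.1]
      exact hτδ.trans (hδrT.trans_le (min_le_left _ _))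
    · simp [mollK_eq_zero_of_le hj_supp hδ hδτ]
  calc dist (∫ τ in Ioc 0 T, mollK j δ τ * g τ) (g 0 / 2)
      = ‖∫ τ in Ioc 0 T, mollK j δ τ * (g τ - g 0)‖ := by rw [dist_eq_norm, hdiff]
    _ ≤ ∫ τ in Ioc 0 T, mollK j δ τ * (ε / 2) :=
      norm_integral_le_of_norm_le ((hK.mul continuous_const).integrableOn_Ioc)
        ((ae_restrict_iff' measurableSet_Ioc).2 (ae_of_all _ hbound))
    _ < ε := by rw [MeasureTheory.integral_mul_const, hmass]; linarith

theorem tendsto_setIntegral_Ioc_mollK_sub_mul {T : ℝ} (hT : 0 < T) (hj : Continuous j)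
    (hj_even : ∀ t, j (-t) = j t) (hj_nonneg : ∀ t, 0 ≤ j t)
    (hj_supp : Function.support j ⊆ Ioo (-1) 1) (hj_int : ∫ t, j t = 1)
    {g : ℝ → ℝ} (hg : Continuous g) :
    Tendsto (fun δ => ∫ τ in Ioc 0 T, mollK j δ (τ - T) * g τ) (𝓝[>] 0) (𝓝 (g T / 2)) := by
  have h := tendsto_setIntegral_Ioc_mollK_mul hT hj hj_even hj_nonneg hj_supp hj_int
    (hg.comp (continuous_sub_left T))
  rw [Function.comp_apply, sub_zero] at h
  refine h.congr fun δ => ?_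
  rw [← integral_of_le hT.le, ← integral_of_le hT.le]
  simpa [sub_sub_cancel_left, mollK_neg hj_even] using
    (integral_comp_sub_left (fun τ => mollK j δ (τ - T) * g τ) T (a := 0) (b := T))

end Mollifier

section Hilbert

variable {H : Type*} [NormedAddCommGroup H] [InnerProductSpace ℝ H]

noncomputable def crossInner (f g : ℝ → H) (s t : ℝ) : ℝ := ⟪f s, g t⟫ + ⟪g s, f t⟫

variable {f g : ℝ → H}

theorem crossInner_comm (f g : ℝ → H) (s t : ℝ) : crossInner f g s t = crossInner f g t s := by
  rw [crossInner, crossInner, real_inner_comm (f t), real_inner_comm (g t), add_comm]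

theorem stronglyMeasurable_uncurry_crossInner (hf : StronglyMeasurable f)
    (hg : StronglyMeasurable g) : StronglyMeasurable (Function.uncurry (crossInner f g)) :=
  ((hf.comp_measurable measurable_fst).inner (hg.comp_measurable measurable_snd)).add
    ((hg.comp_measurable measurable_fst).inner (hf.comp_measurable measurable_snd))

theorem abs_crossInner_le {Mf Mg : ℝ} (hf : ∀ t, ‖f t‖ ≤ Mf) (hg : ∀ t, ‖g t‖ ≤ Mg) (s t : ℝ) :
    |crossInner f g s t| ≤ 2 * (Mf * Mg) := by
  have hMf : 0 ≤ Mf := (norm_nonneg _).trans (hf 0)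
  have h (a b : H) (ha : ‖a‖ ≤ Mf) (hb : ‖b‖ ≤ Mg) : |⟪a, b⟫| ≤ Mf * Mg :=
    (abs_real_inner_le_norm a b).trans (mul_le_mul ha hb (norm_nonneg _) hMf)
  calc |crossInner f g s t| ≤ |⟪f s, g t⟫| + |⟪g s, f t⟫| := abs_add_le _ _
    _ ≤ Mf * Mg + Mf * Mg := by
      gcongr
      · exact h _ _ (hf s) (hg t)
      · rw [real_inner_comm]; exact h _ _ (hf t) (hg s)
    _ = 2 * (Mf * Mg) := by ring

theorem continuous_crossInner_left (hf : ∀ φ, Continuous fun t => ⟪f t, φ⟫)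
    (hg : ∀ φ, Continuous fun t => ⟪g t, φ⟫) (t : ℝ) : Continuous fun s => crossInner f g s t :=
  (hf _).add (hg _)

end Hilbert

section Extension

variable {H : Type*} {T s : ℝ} (u : ℝ → H)

theorem extendT_of_nonpos (hT : 0 ≤ T) (hs : s ≤ 0) : extendT T u s = u 0 := by
  rw [extendT, min_eq_left (hs.trans hT), max_eq_left hs]

theorem extendT_of_le (hT : 0 ≤ T) (hs : T ≤ s) : extendT T u s = u T := by
  rw [extendT, min_eq_right hs, max_eq_right hT]

theorem extendT_of_mem_Icc (hs : s ∈ Icc 0 T) : extendT T u s = u s := by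
  rw [extendT, min_eq_left hs.2, max_eq_right hs.1]

end Extension

section Mollification

variable {H : Type*} [NormedAddCommGroup H] [InnerProductSpace ℝ H] [CompleteSpace H]
  {T δ : ℝ} {j : ℝ → ℝ}

theorem hasDerivAt_mollT (hj : ContDiff ℝ 1 j) (hjc : HasCompactSupport j) (hδ : δ ≠ 0)
    {u : ℝ → H} (hu : LocallyIntegrable (extendT T u)) (τ : ℝ) :
    HasDerivAt (mollT T j u δ) (∫ s, deriv (mollK j δ) (τ - s) • extendT T u s) τ :=
  hasDerivAt_integral_comp_sub_smul (contDiff_mollK hj) (hasCompactSupport_mollK hjc hδ) hu τ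

theorem inner_deriv_mollT_add_inner_deriv_mollT (hj : ContDiff ℝ 1 j)
    (hjc : HasCompactSupport j) (hδ : δ ≠ 0) {u v : ℝ → H} (hu : MemLp (extendT T u) ⊤)
    (hv : MemLp (extendT T v) ⊤) (τ : ℝ) :
    ⟪extendT T u τ, deriv (mollT T j v δ) τ⟫ + ⟪deriv (mollT T j u δ) τ, extendT T v τ⟫
      = ∫ s, deriv (mollK j δ) (τ - s) * crossInner (extendT T v) (extendT T u) s τ := by
  have hK' : Integrable fun s => deriv (mollK j δ) (τ - s) :=
    (hasCompactSupport_mollK hjc hδ).integrable_deriv_comp_sub (contDiff_mollK hj) τ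
  have hiu : Integrable fun s => deriv (mollK j δ) (τ - s) • extendT T u s :=
    hK'.smul_of_top_left hu
  have hiv : Integrable fun s => deriv (mollK j δ) (τ - s) • extendT T v s :=
    hK'.smul_of_top_left hv
  rw [(hasDerivAt_mollT hj hjc hδ (hv.locallyIntegrable le_top) τ).deriv,
    (hasDerivAt_mollT hj hjc hδ (hu.locallyIntegrable le_top) τ).deriv,
    real_inner_comm (extendT T v τ), ← integral_inner hiv, ← integral_inner hiu,
    ← integral_add (hiv.const_inner _) (hiu.const_inner _)]
  congr 1
  ext s
  simp only [real_inner_smul_right, crossInner, real_inner_comm (extendT T v s),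
    real_inner_comm (extendT T u s), mul_add]

theorem integral_inner_deriv_mollT_add_eq (hT : 0 < T) (hj : ContDiff ℝ 1 j)
    (hj_even : ∀ t, j (-t) = j t) (hj_supp : Function.support j ⊆ Ioo (-1) 1) (hδ : 0 < δ)
    {u v : ℝ → H} {Mu Mv : ℝ} (hMu : ∀ t, ‖u t‖ ≤ Mu) (hMv : ∀ t, ‖v t‖ ≤ Mv)
    (hu_wc : ∀ φ : H, Continuous fun t => ⟪extendT T u t, φ⟫)
    (hv_wc : ∀ φ : H, Continuous fun t => ⟪extendT T v t, φ⟫) :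
    ∫ τ in 0..T, (⟪u τ, deriv (mollT T j v δ) τ⟫ + ⟪deriv (mollT T j u δ) τ, v τ⟫)
      = (∫ τ in Ioc 0 T, mollK j δ (τ - T) * crossInner (extendT T v) (extendT T u) T τ)
        - ∫ τ in Ioc 0 T, mollK j δ τ * crossInner (extendT T v) (extendT T u) 0 τ := by
  have hjc : HasCompactSupport j :=
    .of_support_subset_isCompact isCompact_Icc (hj_supp.trans Ioo_subset_Icc_self)
  have hu := stronglyMeasurable_of_continuous_inner hu_wc
  have hv := stronglyMeasurable_of_continuous_inner hv_wc
  have hu_bdd (t : ℝ) : ‖extendT T u t‖ ≤ Mu := hMu _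
  have hv_bdd (t : ℝ) : ‖extendT T v t‖ ≤ Mv := hMv _
  rw [integral_of_le hT.le, ← setIntegral_Ioc_integral_deriv_comp_sub_mul hT.le
    (contDiff_mollK hj) (hasCompactSupport_mollK hjc hδ.ne') (mollK_neg hj_even)
    (stronglyMeasurable_uncurry_crossInner hv hu) (abs_crossInner_le hv_bdd hu_bdd)
    (continuous_crossInner_left hv_wc hu_wc) (crossInner_comm _ _)]
  · refine setIntegral_congr_fun measurableSet_Ioc fun τ hτ => ?_
    rw [← extendT_of_mem_Icc u (Ioc_subset_Icc_self hτ),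
      ← extendT_of_mem_Icc v (Ioc_subset_Icc_self hτ)]
    exact inner_deriv_mollT_add_inner_deriv_mollT hj hjc hδ.ne'
      (memLp_top_of_bound hu.aestronglyMeasurable Mu (ae_of_all _ hu_bdd))
      (memLp_top_of_bound hv.aestronglyMeasurable Mv (ae_of_all _ hv_bdd)) τ
  · intro s hs t
    simp only [crossInner, extendT_of_nonpos _ hT.le hs, extendT_of_nonpos _ hT.le le_rfl]
  · intro s hs t
    simp only [crossInner, extendT_of_le _ hT.le hs, extendT_of_le _ hT.le le_rfl]

end Mollification

theorem stmt1_general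
    {H : Type*} [NormedAddCommGroup H] [InnerProductSpace ℝ H] [CompleteSpace H]
    (T : ℝ) (hT : 0 < T)
    (j : ℝ → ℝ)
    (hj_smooth : ContDiff ℝ (⊤ : ℕ∞) j)
    (hj_even : ∀ t, j (-t) = j t)
    (hj_nonneg : ∀ t, 0 ≤ j t)
    (hj_supp : Function.support j ⊆ Set.Ioo (-1 : ℝ) 1)
    (hj_int : (∫ t : ℝ, j t) = 1)
    (u v : ℝ → H)
    (hu_bdd : ∃ M, ∀ t, ‖u t‖ ≤ M)
    (hv_bdd : ∃ M, ∀ t, ‖v t‖ ≤ M)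
    -- weak continuity on `[0,T]` together with weak limits at the endpoints,
    -- encoded via the constant extension:
    (hu_wc : ∀ φ : H, Continuous fun t : ℝ => ⟪extendT T u t, φ⟫)
    (hv_wc : ∀ φ : H, Continuous fun t : ℝ => ⟪extendT T v t, φ⟫) :
    Tendsto
      (fun δ : ℝ =>
        ∫ τ in (0 : ℝ)..T,
          (⟪u τ, deriv (mollT T j v δ) τ⟫ + ⟪deriv (mollT T j u δ) τ, v τ⟫))
      (nhdsWithin 0 (Set.Ioi 0))
      (nhds (⟪u T, v T⟫ - ⟪u 0, v 0⟫)) := by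
  obtain ⟨Mu, hMu⟩ := hu_bdd
  obtain ⟨Mv, hMv⟩ := hv_bdd
  have hj : ContDiff ℝ 1 j := hj_smooth.of_le (by exact_mod_cast le_top)
  have hc (t : ℝ) : Continuous (crossInner (extendT T v) (extendT T u) t) :=
    (continuous_crossInner_left hv_wc hu_wc t).congr fun s => crossInner_comm _ _ s t
  have hlim :=
    (tendsto_setIntegral_Ioc_mollK_sub_mul hT hj.continuous hj_even hj_nonneg hj_supp hj_int
      (hc T)).sub
    (tendsto_setIntegral_Ioc_mollK_mul hT hj.continuous hj_even hj_nonneg hj_supp hj_int (hc 0))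
  have hval : crossInner (extendT T v) (extendT T u) T T / 2
      - crossInner (extendT T v) (extendT T u) 0 0 / 2 = ⟪u T, v T⟫ - ⟪u 0, v 0⟫ := by
    simp only [crossInner, extendT_of_le _ hT.le le_rfl, extendT_of_nonpos _ hT.le le_rfl,
      real_inner_comm (u _)]
    ring
  rw [← hval]
  exact hlim.congr' (eventually_nhdsWithin_of_forall fun δ hδ =>
    (integral_inner_deriv_mollT_add_eq hT hj hj_even hj_supp hδ hMu hMv hu_wc hv_wc).symm)

theorem stmt1
    {H : Type*} [NormedAddCommGroup H] [InnerProductSpace ℝ H] [CompleteSpace H]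
    (T : ℝ) (hT : 0 < T)
    (j : ℝ → ℝ)
    (hj_smooth : ContDiff ℝ (⊤ : ℕ∞) j)
    (hj_even : ∀ t, j (-t) = j t)
    (hj_nonneg : ∀ t, 0 ≤ j t)
    (hj_supp : Function.support j ⊆ Set.Ioo (-1 : ℝ) 1)
    (hj_int : (∫ t : ℝ, j t) = 1)
    (hj_mono : ∀ t : ℝ, 0 ≤ t → deriv j t ≤ 0)
    (u v : ℝ → H)
    (hu_bdd : ∃ M, ∀ t, ‖u t‖ ≤ M)
    (hv_bdd : ∃ M, ∀ t, ‖v t‖ ≤ M)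
    -- weak continuity on `[0,T]` together with weak limits at the endpoints,
    -- encoded via the constant extension:
    (hu_wc : ∀ φ : H, Continuous fun t : ℝ => ⟪extendT T u t, φ⟫)
    (hv_wc : ∀ φ : H, Continuous fun t : ℝ => ⟪extendT T v t, φ⟫) :
    Tendsto
      (fun δ : ℝ =>
        ∫ τ in (0 : ℝ)..T,
          (⟪u τ, deriv (mollT T j v δ) τ⟫ + ⟪deriv (mollT T j u δ) τ, v τ⟫))
      (nhdsWithin 0 (Set.Ioi 0))
      (nhds (⟪u T, v T⟫ - ⟪u 0, v 0⟫)) :=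
  stmt1_general T hT j hj_smooth hj_even hj_nonneg hj_supp hj_int u v hu_bdd hv_bdd hu_wc hv_wc
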